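/- For all convex bodies K, C in R^n, the generalized concentricity inequality holds: s(C)·r(K,C) + R(K,C) ≤ (1/2)(1+s(C))·D(K,C). -/

import Mathlib

open Pointwise

/-- A convex body: compact, convex, with nonempty interior. -/
def IsBody {n : ℕ} (K : Set (Fin n → ℝ)) : Prop :=
  Convex ℝ K ∧ IsCompact K ∧ (interior K).Nonempty

/-- Circumradius of `K` w.r.t. `C`: smallest `ρ > 0` with `K` contained in a translate of `ρ • C`. -/
noncomputable def circR {n : ℕ} (K C : Set (Fin n → ℝ)) : ℝ :=
  sInf {ρ : ℝ | 0 < ρ ∧ ∃ t : Fin n → ℝ, K ⊆ t +ᵥ ρ • C}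

/-- Inradius of `K` w.r.t. `C`: largest `ρ ≥ 0` with a translate of `ρ • C` inside `K`. -/
noncomputable def inrad {n : ℕ} (K C : Set (Fin n → ℝ)) : ℝ :=
  sSup {ρ : ℝ | 0 ≤ ρ ∧ ∃ t : Fin n → ℝ, t +ᵥ ρ • C ⊆ K}

/-- Minkowski asymmetry `s(K) = R(-K, K)`. -/
noncomputable def asym {n : ℕ} (K : Set (Fin n → ℝ)) : ℝ := circR (-K) K

/-- Diameter of `K` w.r.t. `C`: twice the maximal circumradius of a segment with endpoints in `K`. -/
noncomputable def diamC {n : ℕ} (K C : Set (Fin n → ℝ)) : ℝ :=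
  sSup {d : ℝ | ∃ x ∈ K, ∃ y ∈ K, d = 2 * circR (segment ℝ x y) C}

/-- `K` is (diametrically) complete w.r.t. `C`. -/
def IsDiamComplete {n : ℕ} (K C : Set (Fin n → ℝ)) : Prop :=
  ∀ K' : Set (Fin n → ℝ), IsBody K' → K ⊂ K' → diamC K C < diamC K' C

/-- `S` is an `n`-simplex: convex hull of `n+1` affinely independent points. -/
def IsSimplexBody {n : ℕ} (S : Set (Fin n → ℝ)) : Prop :=
  ∃ p : Fin (n + 1) → (Fin n → ℝ), AffineIndependent ℝ p ∧ S = convexHull ℝ (Set.range p)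

/-- Support function of `C`. -/
noncomputable def supp {n : ℕ} (C : Set (Fin n → ℝ)) (a : Fin n → ℝ) : ℝ :=
  sSup {r : ℝ | ∃ x ∈ C, r = dotProduct a x}

/-- `A ⊆ₜ B`: `A` is contained in some translate of `B`. -/
def SubsetT {n : ℕ} (A B : Set (Fin n → ℝ)) : Prop := ∃ t : Fin n → ℝ, A ⊆ t +ᵥ B

/-!
Let `c +ᵥ R • C` be a smallest homothet of `C` containing `K` and let `t +ᵥ ρ • C ⊆ K`.
By minimality of `R`, for every point `p` some common support hyperplane of `K` and `c +ᵥ R • C`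
has an outer normal `f` with `f p ≤ f c`; otherwise, by compactness of the dual unit sphere,
moving the centre slightly towards `p` would allow a smaller radius. Translate `C` so that
`-C ⊆ s • C` and let `α`, `β` be its support values at `f`, `-f`; then `β ≤ s α`. For a suitable
`p`, the point of `K` maximizing `f` and the point of the inner homothet minimizing `f` span a
segment of `f`-width at least `R α + ρ β`, so `D (α + β) ≥ 2 (R α + ρ β)`. The inequality follows
from `(1 + s) (R α + ρ β) - (s ρ + R) (α + β) = (R - ρ) (s α - β) ≥ 0`.
-/

namespace Concentricity

open Set Filter Topology

theorem _root_.IsCompact.exists_pos_le_add_mul {X : Type*} [TopologicalSpace X] {S : Set X}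
    (hS : IsCompact S) {F G : X → ℝ} (hF : ContinuousOn F S) (hG : ContinuousOn G S)
    (hF0 : ∀ x ∈ S, 0 ≤ F x) (hFG : ∀ x ∈ S, 0 < max (F x) (G x)) :
    ∃ ε > 0, ∃ η > 0, ∀ x ∈ S, η ≤ F x + ε * G x := by
  obtain ⟨m, hm, hmS⟩ := hS.exists_forall_le' (hF.sup hG) hFG
  obtain ⟨N, hN⟩ := hS.exists_bound_of_continuousOn hG
  obtain ⟨ε, hε, hεN⟩ : ∃ ε > 0, ε * (|N| + 1) = m / 2 :=
    ⟨m / (2 * (|N| + 1)), by positivity, by field_simp⟩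
  refine ⟨ε, hε, min (m / 2) (ε * m), by positivity, fun x hx => ?_⟩
  have hεG : -(m / 2) ≤ ε * G x := by
    have : |G x| ≤ |N| + 1 := by linarith [hN x hx, le_abs_self N, Real.norm_eq_abs (G x)]
    nlinarith [neg_abs_le (G x)]
  rcases le_max_iff.1 (hmS x hx) with h | h
  · linarith [min_le_left (m / 2) (ε * m)]
  · linarith [min_le_right (m / 2) (ε * m), hF0 x hx, mul_le_mul_of_nonneg_left h hε.le]

theorem _root_.IsCompact.eventually_mul_le {X : Type*} [TopologicalSpace X] {S : Set X}
    (hS : IsCompact S) {H : X → ℝ} (hH : ContinuousOn H S) {η : ℝ} (hη : 0 < η) :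
    ∀ᶠ δ in 𝓝 0, ∀ x ∈ S, δ * H x ≤ η := by
  obtain ⟨N, hN⟩ := hS.exists_bound_of_continuousOn hH
  filter_upwards [Metric.ball_mem_nhds (0 : ℝ) (show 0 < η / (|N| + 1) by positivity)]
    with δ hδ x hx
  rw [Metric.mem_ball, dist_zero_right, Real.norm_eq_abs, lt_div_iff₀ (by positivity)] at hδ
  have : |H x| ≤ |N| + 1 := by linarith [hN x hx, le_abs_self N, Real.norm_eq_abs (H x)]
  calc δ * H x ≤ |δ| * |H x| := by rw [← abs_mul]; exact le_abs_self _
    _ ≤ |δ| * (|N| + 1) := by gcongr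
    _ ≤ η := hδ.le

section SupportFunction

variable {E : Type*} [NormedAddCommGroup E] [NormedSpace ℝ E] {A B C K : Set E}
  {f : StrongDual ℝ E} {t x y : E} {ρ : ℝ}

theorem mem_vadd_smul_set_iff : x ∈ t +ᵥ ρ • C ↔ ∃ z ∈ C, t + ρ • z = x := by
  simp [Set.mem_vadd_set, Set.mem_smul_set]

noncomputable def supportFun (C : Set E) (f : StrongDual ℝ E) : ℝ := sSup (f '' C)

theorem le_supportFun (hC : IsCompact C) (hx : x ∈ C) : f x ≤ supportFun C f :=
  le_csSup (hC.image f.continuous).bddAbove (mem_image_of_mem f hx)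

theorem supportFun_le {a : ℝ} (hC : C.Nonempty) (h : ∀ x ∈ C, f x ≤ a) : supportFun C f ≤ a :=
  csSup_le (hC.image f) (forall_mem_image.2 h)

theorem exists_apply_eq_supportFun (hC : IsCompact C) (hne : C.Nonempty) (f : StrongDual ℝ E) :
    ∃ x ∈ C, f x = supportFun C f := by
  obtain ⟨x, hx, hmax⟩ := hC.exists_isMaxOn hne f.continuous.continuousOn
  exact ⟨x, hx, le_antisymm (le_supportFun hC hx) (supportFun_le hne fun y hy => hmax hy)⟩

theorem supportFun_mono (hAB : A ⊆ B) (hA : A.Nonempty) (hB : IsCompact B)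
    (f : StrongDual ℝ E) : supportFun A f ≤ supportFun B f :=
  supportFun_le hA fun _ hx => le_supportFun hB (hAB hx)

theorem supportFun_neg (C : Set E) (f : StrongDual ℝ E) :
    supportFun (-C) f = supportFun C (-f) := by
  rw [supportFun, supportFun, ← image_neg_eq_neg, image_image]
  simp

theorem supportFun_smul (C : Set E) {a : ℝ} (ha : 0 ≤ a) (f : StrongDual ℝ E) :
    supportFun C (a • f) = a * supportFun C f := by
  rw [supportFun, supportFun, ← smul_eq_mul, ← Real.sSup_smul_of_nonneg ha, ← image_smul,
    image_image]
  rfl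

theorem supportFun_vadd_smul (hC : IsCompact C) (hne : C.Nonempty) (hρ : 0 ≤ ρ) (t : E)
    (f : StrongDual ℝ E) : supportFun (t +ᵥ ρ • C) f = f t + ρ * supportFun C f := by
  obtain ⟨x, hx, hfx⟩ := exists_apply_eq_supportFun hC hne f
  apply le_antisymm
  · refine supportFun_le (hne.smul_set.vadd_set) fun y hy => ?_
    obtain ⟨z, hz, rfl⟩ := mem_vadd_smul_set_iff.1 hy
    simpa using mul_le_mul_of_nonneg_left (le_supportFun hC hz) hρ
  · have hmem : t + ρ • x ∈ t +ᵥ ρ • C := mem_vadd_smul_set_iff.2 ⟨x, hx, rfl⟩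
    simpa [← hfx] using le_supportFun ((hC.smul ρ).vadd t) (f := f) hmem

theorem supportFun_le_of_subset_vadd_smul (hK : K.Nonempty) (hC : IsCompact C) (hρ : 0 ≤ ρ)
    (hKC : K ⊆ t +ᵥ ρ • C) (f : StrongDual ℝ E) :
    supportFun K f ≤ f t + ρ * supportFun C f := by
  rw [← supportFun_vadd_smul hC (smul_set_nonempty.1 (vadd_set_nonempty.1 (hK.mono hKC))) hρ]
  exact supportFun_mono hKC hK ((hC.smul ρ).vadd t) f

theorem continuous_supportFun (hC : IsCompact C) (hne : C.Nonempty) :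
    Continuous (supportFun C) := by
  obtain ⟨M, hM⟩ := hC.isBounded.exists_norm_le
  refine (LipschitzWith.of_le_add_mul' M fun f g => supportFun_le hne fun x hx => ?_).continuous
  have hfg : (f - g) x ≤ M * dist f g := by
    rw [dist_eq_norm, mul_comm]
    exact (le_abs_self _).trans ((f - g).le_opNorm x |>.trans (by gcongr; exact hM x hx))
  have := le_supportFun hC (f := g) hx
  simp only [sub_apply] at hfg
  linarith

theorem subset_vadd_smul_of_supportFun_le (hK : IsCompact K) (hC : IsCompact C)
    (hCc : Convex ℝ C) (hne : C.Nonempty) (hρ : 0 ≤ ρ)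
    (h : ∀ f : StrongDual ℝ E, ‖f‖ = 1 → supportFun K f ≤ f t + ρ * supportFun C f) :
    K ⊆ t +ᵥ ρ • C := by
  intro x hx
  by_contra hxC
  have hB : IsCompact (t +ᵥ ρ • C) := (hC.smul ρ).vadd t
  obtain ⟨f, u, hfu, hux⟩ :=
    geometric_hahn_banach_closed_point ((hCc.smul ρ).vadd t) hB.isClosed hxC
  have hBne : (t +ᵥ ρ • C).Nonempty := hne.smul_set.vadd_set
  have hsep : f t + ρ * supportFun C f < f x := by
    rw [← supportFun_vadd_smul hC hne hρ]
    exact (supportFun_le hBne fun y hy => (hfu y hy).le).trans_lt hux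
  have hf : 0 < ‖f‖ := by
    refine norm_pos_iff.2 fun hf0 => ?_
    obtain ⟨y, hy⟩ := hBne
    have := hfu y hy
    simp only [hf0, zero_apply] at this hux
    linarith
  have hunit := h (‖f‖⁻¹ • f) (by rw [norm_smul, norm_inv, norm_norm, inv_mul_cancel₀ hf.ne'])
  rw [supportFun_smul _ (inv_nonneg.2 hf.le), supportFun_smul _ (inv_nonneg.2 hf.le),
    smul_apply, smul_eq_mul, mul_left_comm, ← mul_add] at hunit
  have := le_of_mul_le_mul_left hunit (inv_pos.2 hf)
  linarith [le_supportFun hK (f := f) hx]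

noncomputable def width (C : Set E) (f : StrongDual ℝ E) : ℝ :=
  supportFun C f + supportFun C (-f)

theorem sub_le_width (hC : IsCompact C) (hx : x ∈ C) (hy : y ∈ C) : f x - f y ≤ width C f := by
  have := le_supportFun hC (f := -f) hy
  have := le_supportFun hC (f := f) hx
  simp only [neg_apply] at *
  unfold width
  linarith

theorem width_vadd_smul (hC : IsCompact C) (hne : C.Nonempty) (hρ : 0 ≤ ρ) (t : E)
    (f : StrongDual ℝ E) : width (t +ᵥ ρ • C) f = ρ * width C f := by
  simp only [width, supportFun_vadd_smul hC hne hρ, neg_apply]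
  ring

theorem width_le_of_subset_vadd_smul (hK : K.Nonempty) (hC : IsCompact C) (hρ : 0 ≤ ρ)
    (hKC : K ⊆ t +ᵥ ρ • C) (f : StrongDual ℝ E) : width K f ≤ ρ * width C f := by
  have := supportFun_le_of_subset_vadd_smul hK hC hρ hKC f
  have := supportFun_le_of_subset_vadd_smul hK hC hρ hKC (-f)
  simp only [width, neg_apply] at *
  linarith

theorem width_pos (hC : IsCompact C) (hint : (interior C).Nonempty) (hf : f ≠ 0) :
    0 < width C f := by
  obtain ⟨z, hz⟩ := hint
  have hnhds : f '' interior C ∈ 𝓝 (f z) :=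
    (f.isOpenMap_of_ne_zero hf _ isOpen_interior).mem_nhds (mem_image_of_mem f hz)
  obtain ⟨_, hlt, w, hw, rfl⟩ := ((frequently_gt_nhds (f z)).and_eventually hnhds).exists
  linarith [sub_le_width hC (f := f) (interior_subset hw) (interior_subset hz)]

theorem exists_touching_functional [FiniteDimensional ℝ E] (hK : IsCompact K) (hKne : K.Nonempty)
    (hC : IsCompact C) (hCc : Convex ℝ C) (hCne : C.Nonempty) {c : E} {R : ℝ} (hR : 0 < R)
    (hKR : K ⊆ c +ᵥ R • C) (hmin : ∀ t : E, ∀ ρ ∈ Ioo 0 R, ¬K ⊆ t +ᵥ ρ • C) (p : E) :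
    ∃ f : StrongDual ℝ E, f ≠ 0 ∧ supportFun K f = f c + R * supportFun C f ∧ f p ≤ f c := by
  by_contra! hcon
  have hgap (f : StrongDual ℝ E) : 0 ≤ f c + R * supportFun C f - supportFun K f :=
    sub_nonneg.2 (supportFun_le_of_subset_vadd_smul hKne hC hR.le hKR f)
  have hS := isCompact_sphere (0 : StrongDual ℝ E) 1
  have hKcont := continuous_supportFun hK hKne
  have hCcont := continuous_supportFun hC hCne
  have hmax (f) (hf : f ∈ Metric.sphere (0 : StrongDual ℝ E) 1) :
      0 < max (f c + R * supportFun C f - supportFun K f) (f (p - c)) := by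
    rcases (hgap f).lt_or_eq with h | h
    · exact lt_max_of_lt_left h
    · have := hcon f (Metric.ne_of_mem_sphere hf one_ne_zero) (by linarith)
      exact lt_max_of_lt_right (by simp only [map_sub]; linarith)
  obtain ⟨ε, hε, η, hη, hFG⟩ := hS.exists_pos_le_add_mul (by fun_prop) (by fun_prop)
    (fun f _ => hgap f) hmax
  obtain ⟨δ, hδ, hδ0, hδR⟩ := (((hS.eventually_mul_le hCcont.continuousOn hη).filter_mono
    nhdsWithin_le_nhds).and (Ioo_mem_nhdsGT hR)).exists
  refine hmin (c + ε • (p - c)) (R - δ) ⟨by linarith, by linarith⟩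
    (subset_vadd_smul_of_supportFun_le hK hC hCc hCne (by linarith) fun f hf => ?_)
  have h1 := hFG f (mem_sphere_zero_iff_norm.2 hf)
  have h2 := hδ f (mem_sphere_zero_iff_norm.2 hf)
  simp only [map_add, map_smul, smul_eq_mul] at h1 ⊢
  nlinarith

end SupportFunction

section Radii

variable {n : ℕ} {C K : Set (Fin n → ℝ)} {c t : Fin n → ℝ} {ρ R : ℝ}

theorem _root_.IsBody.neg (hC : IsBody C) : IsBody (-C) := by
  obtain ⟨hCc, hCk, z, hz⟩ := hC
  exact ⟨hCc.neg, hCk.neg, -z, interior_maximal (neg_subset_neg.2 interior_subset)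
    isOpen_interior.neg (neg_mem_neg.2 hz)⟩

theorem _root_.IsBody.nonempty (hC : IsBody C) : C.Nonempty := hC.2.2.mono interior_subset

theorem circR_nonneg (K C : Set (Fin n → ℝ)) : 0 ≤ circR K C :=
  Real.sInf_nonneg fun _ h => h.1.le

theorem circR_le (hρ : 0 < ρ) (h : K ⊆ t +ᵥ ρ • C) : circR K C ≤ ρ :=
  csInf_le ⟨0, fun _ h => h.1.le⟩ ⟨hρ, t, h⟩

theorem width_div_le_circR (hK : K.Nonempty) (hC : IsCompact C) {f : StrongDual ℝ (Fin n → ℝ)}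
    (hw : 0 < width C f) (hne : ∃ ρ > (0 : ℝ), ∃ t : Fin n → ℝ, K ⊆ t +ᵥ ρ • C) :
    width K f / width C f ≤ circR K C :=
  le_csInf (let ⟨ρ, hρ, ht⟩ := hne; ⟨ρ, hρ, ht⟩) fun _ ⟨hρ, _, ht⟩ =>
    (div_le_iff₀ hw).2 (width_le_of_subset_vadd_smul hK hC hρ.le ht f)

theorem exists_subset_vadd_smul (hK : Bornology.IsBounded K) (hC : (interior C).Nonempty) :
    ∃ ρ > (0 : ℝ), ∃ t : Fin n → ℝ, K ⊆ t +ᵥ ρ • C := by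
  obtain ⟨z, hz⟩ := hC
  obtain ⟨ε, hε, hball⟩ := Metric.mem_nhds_iff.1 (mem_interior_iff_mem_nhds.1 hz)
  obtain ⟨M, hM, hKM⟩ := hK.exists_pos_norm_le
  set ρ := 2 * M / ε
  have hρ : 0 < ρ := by positivity
  refine ⟨ρ, hρ, -(ρ • z), fun x hx => mem_vadd_smul_set_iff.2 ⟨z + ρ⁻¹ • x, hball ?_, ?_⟩⟩
  · rw [Metric.mem_ball, dist_eq_norm, add_sub_cancel_left, norm_smul, norm_inv,
      Real.norm_of_nonneg hρ.le, inv_mul_lt_iff₀ hρ]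
    calc ‖x‖ ≤ M := hKM x hx
      _ < ρ * ε := by rw [div_mul_cancel₀ _ hε.ne']; linarith
  · rw [smul_add, smul_inv_smul₀ hρ.ne', neg_add_cancel_left]

theorem circR_pos [Nontrivial (Fin n → ℝ)] (hK : IsBody K) (hC : IsBody C) : 0 < circR K C := by
  obtain ⟨f, hf, -⟩ := exists_dual_vector' ℝ (0 : Fin n → ℝ)
  have hf0 : f ≠ 0 := by rintro rfl; simp at hf
  exact (div_pos (width_pos hK.2.1 hK.2.2 hf0) (width_pos hC.2.1 hC.2.2 hf0)).trans_le
    (width_div_le_circR hK.nonempty hC.2.1 (width_pos hC.2.1 hC.2.2 hf0)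
      (exists_subset_vadd_smul hK.2.1.isBounded hC.2.2))

theorem exists_subset_vadd_circR_smul_of_pos (hK : K.Nonempty) (hC : IsCompact C)
    (hR : 0 < circR K C) (hne : ∃ ρ > (0 : ℝ), ∃ t : Fin n → ℝ, K ⊆ t +ᵥ ρ • C) :
    ∃ c : Fin n → ℝ, K ⊆ c +ᵥ circR K C • C := by
  obtain ⟨ρ, hanti, hlim, hmem⟩ := exists_seq_tendsto_sInf hne ⟨0, fun _ h => h.1.le⟩
  choose hρ t ht using hmem
  obtain ⟨x₀, hx₀⟩ := hK
  have hbdd (k : ℕ) : t k ∈ (fun q : ℝ × (Fin n → ℝ) => x₀ - q.1 • q.2) '' (Icc 0 (ρ 0) ×ˢ C) := by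
    obtain ⟨z, hz, hx⟩ := mem_vadd_smul_set_iff.1 (ht k hx₀)
    exact ⟨(ρ k, z), ⟨⟨(hρ k).le, hanti (Nat.zero_le k)⟩, hz⟩, by simp [← hx]⟩
  obtain ⟨c, -, φ, hφ, htc⟩ := ((isCompact_Icc.prod hC).image (by fun_prop)).tendsto_subseq hbdd
  refine ⟨c, fun x hx => ?_⟩
  have hlim' : Tendsto (fun k => (ρ (φ k))⁻¹ • (x - t (φ k))) atTop
      (𝓝 ((circR K C)⁻¹ • (x - c))) :=
    ((hlim.comp hφ.tendsto_atTop).inv₀ hR.ne').smul (tendsto_const_nhds.sub htc)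
  have hz := hC.isClosed.mem_of_tendsto hlim' (Eventually.of_forall fun k => by
    obtain ⟨z, hz, hx⟩ := mem_vadd_smul_set_iff.1 (ht (φ k) hx)
    rwa [← hx, add_sub_cancel_left, inv_smul_smul₀ (hρ _).ne'])
  exact mem_vadd_smul_set_iff.2 ⟨_, hz, by rw [smul_inv_smul₀ hR.ne', add_sub_cancel]⟩

theorem _root_.IsBody.exists_subset_vadd_circR_smul [Nontrivial (Fin n → ℝ)] (hK : IsBody K)
    (hC : IsBody C) : ∃ c : Fin n → ℝ, K ⊆ c +ᵥ circR K C • C :=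
  exists_subset_vadd_circR_smul_of_pos hK.nonempty hC.2.1 (circR_pos hK hC)
    (exists_subset_vadd_smul hK.2.1.isBounded hC.2.2)

theorem two_mul_circR_segment_le_diamC (hK : Convex ℝ K) {x y : Fin n → ℝ} (hx : x ∈ K)
    (hy : y ∈ K) (hR : 0 < R) (hKR : K ⊆ c +ᵥ R • C) :
    2 * circR (segment ℝ x y) C ≤ diamC K C := by
  refine le_csSup ⟨2 * R, ?_⟩ ⟨x, hx, y, hy, rfl⟩
  rintro _ ⟨x, hx, y, hy, rfl⟩
  linarith [circR_le hR ((hK.segment_subset hx hy).trans hKR)]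

theorem two_mul_sub_le_diamC_mul_width (hK : Convex ℝ K) (hC : IsCompact C)
    {f : StrongDual ℝ (Fin n → ℝ)} (hw : 0 < width C f) {x y : Fin n → ℝ} (hx : x ∈ K)
    (hy : y ∈ K) (hR : 0 < R) (hKR : K ⊆ c +ᵥ R • C) :
    2 * (f x - f y) ≤ diamC K C * width C f := by
  have hseg : IsCompact (segment ℝ x y) := by
    simpa only [convexHull_pair] using (toFinite {x, y}).isCompact_convexHull ℝ
  have h1 := sub_le_width hseg (f := f) (left_mem_segment ℝ x y) (right_mem_segment ℝ x y)
  have h2 := width_div_le_circR ⟨x, left_mem_segment ℝ x y⟩ hC hw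
    ⟨R, hR, c, (hK.segment_subset hx hy).trans hKR⟩
  have h3 := two_mul_circR_segment_le_diamC hK hx hy hR hKR
  rw [div_le_iff₀ hw] at h2
  nlinarith

theorem le_of_vadd_smul_subset_vadd_smul (hC : IsCompact C) (hne : C.Nonempty)
    {f : StrongDual ℝ (Fin n → ℝ)} (hw : 0 < width C f) (hρ : 0 ≤ ρ) (hR : 0 ≤ R)
    (h : t +ᵥ ρ • C ⊆ c +ᵥ R • C) : ρ ≤ R := by
  have := width_le_of_subset_vadd_smul hne.smul_set.vadd_set hC hR h f
  rw [width_vadd_smul hC hne hρ] at this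
  exact le_of_mul_le_mul_right this hw

theorem mul_add_circR_le_of_vadd_smul_subset [Nontrivial (Fin n → ℝ)] (hK : IsBody K)
    (hC : IsBody C) {s : ℝ} {u : Fin n → ℝ} (hs : 0 ≤ s) (hsC : -C ⊆ u +ᵥ s • C) (hρ : 0 ≤ ρ)
    (ht : t +ᵥ ρ • C ⊆ K) : s * ρ + circR K C ≤ 1 / 2 * (1 + s) * diamC K C := by
  have hKk : IsCompact K := hK.2.1
  have hCk : IsCompact C := hC.2.1
  set R := circR K C
  have hR : 0 < R := circR_pos hK hC
  obtain ⟨c, hc⟩ := hK.exists_subset_vadd_circR_smul hC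
  -- `C' := v +ᵥ C` satisfies `-C' ⊆ s • C'`, and `α`, `β` below are its support values at `f`,
  -- `-f`. Relative to `C'` the two homothets are centred at `c - R • v` and `t - ρ • v`, and `p`
  -- is chosen so that `f` compares these centres.
  set v := (1 + s)⁻¹ • u
  obtain ⟨f, hf0, htouch, hfp⟩ := exists_touching_functional hKk hK.nonempty hCk hC.1 hC.nonempty
    hR hc (fun _ _ hρ' h => (circR_le hρ'.1 h).not_gt hρ'.2) (t + (R - ρ) • v)
  have hw := width_pos hCk hC.2.2 hf0
  set α := supportFun C f + f v
  set β := supportFun C (-f) - f v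
  have hαβ : α + β = width C f := by simp only [α, β, width]; ring
  have hβα : β ≤ s * α := by
    have := supportFun_le_of_subset_vadd_smul hC.nonempty.neg hCk hs hsC f
    have hu : f u = (1 + s) * f v := by
      rw [map_smul, smul_eq_mul, mul_inv_cancel_left₀ (by linarith)]
    rw [supportFun_neg] at this
    simp only [α, β]
    linarith
  have hρR : ρ ≤ R := le_of_vadd_smul_subset_vadd_smul hCk hC.nonempty hw hρ hR.le (ht.trans hc)
  obtain ⟨x, hx, hfx⟩ := exists_apply_eq_supportFun hKk hK.nonempty f
  obtain ⟨w, hw', hfw⟩ := exists_apply_eq_supportFun hCk hC.nonempty (-f)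
  have hy : t + ρ • w ∈ K := ht (mem_vadd_smul_set_iff.2 ⟨w, hw', rfl⟩)
  have hxy : R * α + ρ * β ≤ f x - f (t + ρ • w) := by
    simp only [map_add, map_smul, smul_eq_mul, neg_apply] at hfp hfw ⊢
    simp only [α, β]
    nlinarith
  have hD := two_mul_sub_le_diamC_mul_width hK.1 hCk hw hx hy hR hc
  rw [← hαβ] at hD hw
  refine le_of_mul_le_mul_right ?_ hw
  nlinarith [mul_nonneg (sub_nonneg.2 hρR) (sub_nonneg.2 hβα)]

theorem circR_eq_zero_of_subsingleton [Subsingleton (Fin n → ℝ)] (K : Set (Fin n → ℝ))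
    {C : Set (Fin n → ℝ)} (hC : C.Nonempty) : circR K C = 0 := by
  refine le_antisymm (le_of_forall_pos_le_add fun ε hε => ?_) (circR_nonneg K C)
  have hK : K ⊆ (0 : Fin n → ℝ) +ᵥ ε • C := by
    rw [hC.smul_set.vadd_set.eq_univ]
    exact Set.subset_univ K
  simpa using circR_le hε hK

theorem diamC_nonneg (K C : Set (Fin n → ℝ)) : 0 ≤ diamC K C :=
  Real.sSup_nonneg <| by
    rintro _ ⟨x, -, y, -, rfl⟩
    linarith [circR_nonneg (segment ℝ x y) C]

end Radii

end Concentricity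

open Concentricity

theorem stmt6 {n : ℕ} (K C : Set (Fin n → ℝ)) (hK : IsBody K) (hC : IsBody C) :
    asym C * inrad K C + circR K C ≤ (1 / 2) * (1 + asym C) * diamC K C := by
  rcases subsingleton_or_nontrivial (Fin n → ℝ) with hn | hn
  · simp only [asym, circR_eq_zero_of_subsingleton _ hC.nonempty]
    linarith [diamC_nonneg K C]
  · obtain ⟨u, hu⟩ : ∃ u, -C ⊆ u +ᵥ asym C • C := hC.neg.exists_subset_vadd_circR_smul hC
    have hs : 0 ≤ asym C := circR_nonneg _ _
    suffices asym C * inrad K C ≤ 1 / 2 * (1 + asym C) * diamC K C - circR K C by linarith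
    obtain ⟨x, hx⟩ := hK.nonempty
    have hne : {ρ : ℝ | 0 ≤ ρ ∧ ∃ t : Fin n → ℝ, t +ᵥ ρ • C ⊆ K}.Nonempty :=
      ⟨0, le_rfl, x, fun y hy => by
        obtain ⟨z, -, rfl⟩ := mem_vadd_smul_set_iff.1 hy
        simpa using hx⟩
    rw [inrad, ← smul_eq_mul, ← Real.sSup_smul_of_nonneg hs]
    refine csSup_le hne.smul_set ?_
    rintro _ ⟨ρ, ⟨hρ, t, ht⟩, rfl⟩
    simp only [smul_eq_mul]
    linarith [mul_add_circR_le_of_vadd_smul_subset hK hC hs hu hρ ht]
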